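/- arXiv:2503.00934 — 2 statements merged into one kernel-verified Lean document; each statement's English description precedes it below -/
import Mathlib

section
/- Continuous area conservation: let Γ₁(t), Γ₂(t) be smooth evolving curves satisfying ∂_t X_j · n_j = ∂_{s_j s_j} μ_j with zero-mass-flux conditions ∂_{s_j} μ_j = 0 at s_j = 0 and equal fluxes ∂_{s_1}μ₁(L₁) = ∂_{s_2}μ₂(L₂) = ∂_{s_3}μ₃(L₃) (with three curves meeting at a common junction and contact points constrained to y = 0). Then the enclosed area A(t) = ∫_{Γ₂} y₂ ∂_{s₂}x₂ ds₂ - ∫_{Γ₁} y₁ ∂_{s₁}x₁ ds₁ satisfies dA/dt = 0. -/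
/-- Dot product on ℝ². -/
def dot (v w : ℝ × ℝ) : ℝ := v.1 * w.1 + v.2 * w.2

/-- Counterclockwise rotation by π/2. -/
def perp (v : ℝ × ℝ) : ℝ × ℝ := (-v.2, v.1)

/-- Partial derivative in the first variable (parameter ρ). -/
noncomputable def pd1 {E : Type*} [NormedAddCommGroup E] [NormedSpace ℝ E]
    (f : ℝ × ℝ → E) (p : ℝ × ℝ) : E := deriv (fun r => f (r, p.2)) p.1

/-- Partial derivative in the second variable (time t). -/
noncomputable def pd2 {E : Type*} [NormedAddCommGroup E] [NormedSpace ℝ E]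
    (f : ℝ × ℝ → E) (p : ℝ × ℝ) : E := deriv (fun t => f (p.1, t)) p.2

/-- Outward unit normal n = -τ^⊥ of the curve ρ ↦ X(ρ,t). -/
noncomputable def nv (X : ℝ × ℝ → ℝ × ℝ) (p : ℝ × ℝ) : ℝ × ℝ :=
  -perp (‖pd1 X p‖⁻¹ • pd1 X p)

/-- Arclength derivative ∂_s f = |∂_ρ X|⁻¹ ∂_ρ f. -/
noncomputable def sder (X : ℝ × ℝ → ℝ × ℝ) (f : ℝ × ℝ → ℝ) (p : ℝ × ℝ) : ℝ :=
  ‖pd1 X p‖⁻¹ * pd1 f p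

open MeasureTheory intervalIntegral Filter Topology Metric Set NNReal

section helpers
variable {E : Type*} [NormedAddCommGroup E] [NormedSpace ℝ E]

lemma hasDerivAt_slice1 (f : ℝ × ℝ → E) (hf : Differentiable ℝ f) (p : ℝ × ℝ) :
    HasDerivAt (fun r => f (r, p.2)) (fderiv ℝ f p ((1:ℝ), (0:ℝ))) p.1 := by
  have h1 : HasDerivAt (fun r : ℝ => (r, p.2)) ((1:ℝ), (0:ℝ)) p.1 :=
    (hasDerivAt_id p.1).prodMk (hasDerivAt_const p.1 p.2)
  have h2 := (hf (p.1, p.2)).hasFDerivAt.comp_hasDerivAt p.1 h1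
  exact h2

lemma hasDerivAt_slice2 (f : ℝ × ℝ → E) (hf : Differentiable ℝ f) (p : ℝ × ℝ) :
    HasDerivAt (fun t => f (p.1, t)) (fderiv ℝ f p ((0:ℝ), (1:ℝ))) p.2 := by
  have h1 : HasDerivAt (fun t : ℝ => (p.1, t)) ((0:ℝ), (1:ℝ)) p.2 :=
    (hasDerivAt_const p.2 p.1).prodMk (hasDerivAt_id p.2)
  have h2 := (hf (p.1, p.2)).hasFDerivAt.comp_hasDerivAt p.2 h1
  exact h2

lemma pd1_eq (f : ℝ × ℝ → E) (hf : Differentiable ℝ f) (p : ℝ × ℝ) :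
    pd1 f p = fderiv ℝ f p ((1:ℝ), (0:ℝ)) := (hasDerivAt_slice1 f hf p).deriv

lemma pd2_eq (f : ℝ × ℝ → E) (hf : Differentiable ℝ f) (p : ℝ × ℝ) :
    pd2 f p = fderiv ℝ f p ((0:ℝ), (1:ℝ)) := (hasDerivAt_slice2 f hf p).deriv

lemma hasDerivAt_pd1 (f : ℝ × ℝ → E) (hf : Differentiable ℝ f) (p : ℝ × ℝ) :
    HasDerivAt (fun r => f (r, p.2)) (pd1 f p) p.1 := by
  rw [pd1_eq f hf p]; exact hasDerivAt_slice1 f hf p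

lemma hasDerivAt_pd2 (f : ℝ × ℝ → E) (hf : Differentiable ℝ f) (p : ℝ × ℝ) :
    HasDerivAt (fun t => f (p.1, t)) (pd2 f p) p.2 := by
  rw [pd2_eq f hf p]; exact hasDerivAt_slice2 f hf p

lemma contDiff_pd1 {f : ℝ × ℝ → E} (hf : ContDiff ℝ (⊤ : ℕ∞) f) : ContDiff ℝ (⊤ : ℕ∞) (pd1 f) := by
  have h : pd1 f = fun p => fderiv ℝ f p ((1:ℝ), (0:ℝ)) :=
    funext fun p => pd1_eq f (hf.differentiable (by simp)) p
  rw [h]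
  exact (hf.fderiv_right (by simp)).clm_apply contDiff_const

lemma contDiff_pd2 {f : ℝ × ℝ → E} (hf : ContDiff ℝ (⊤ : ℕ∞) f) : ContDiff ℝ (⊤ : ℕ∞) (pd2 f) := by
  have h : pd2 f = fun p => fderiv ℝ f p ((0:ℝ), (1:ℝ)) :=
    funext fun p => pd2_eq f (hf.differentiable (by simp)) p
  rw [h]
  exact (hf.fderiv_right (by simp)).clm_apply contDiff_const

lemma pd_comm {f : ℝ × ℝ → E} (hf : ContDiff ℝ (⊤ : ℕ∞) f) (p : ℝ × ℝ) :
    pd1 (pd2 f) p = pd2 (pd1 f) p := by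
  have hd : Differentiable ℝ f := hf.differentiable (by simp)
  have hf' : ContDiff ℝ (⊤ : ℕ∞) (fderiv ℝ f) := hf.fderiv_right (by simp)
  have hd' : Differentiable ℝ (fderiv ℝ f) := hf'.differentiable (by simp)
  have hsymm : ∀ v w, fderiv ℝ (fderiv ℝ f) p v w = fderiv ℝ (fderiv ℝ f) p w v :=
    second_derivative_symmetric (fun y => (hd y).hasFDerivAt) (hd' p).hasFDerivAt
  have hdapp : ∀ v : ℝ × ℝ, Differentiable ℝ (fun q => fderiv ℝ f q v) :=
    fun v q => (hd' q).clm_apply (differentiableAt_const v)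
  have hfd : ∀ v : ℝ × ℝ, fderiv ℝ (fun q => fderiv ℝ f q v) p
      = ((fderiv ℝ (fderiv ℝ f) p).flip) v := by
    intro v
    have hc : HasFDerivAt (fun q => fderiv ℝ f q v)
        (((fderiv ℝ (fderiv ℝ f) p).flip) v) p := by
      have := ((hd' p).hasFDerivAt.clm_apply (hasFDerivAt_const v p))
      simpa using this
    exact hc.fderiv
  have h1 : pd1 (pd2 f) p = fderiv ℝ (fderiv ℝ f) p ((1:ℝ),(0:ℝ)) ((0:ℝ),(1:ℝ)) := by
    have he : pd2 f = fun q => fderiv ℝ f q ((0:ℝ),(1:ℝ)) := funext fun q => pd2_eq f hd q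
    rw [he, pd1_eq _ (hdapp _) p, hfd]
    rfl
  have h2 : pd2 (pd1 f) p = fderiv ℝ (fderiv ℝ f) p ((0:ℝ),(1:ℝ)) ((1:ℝ),(0:ℝ)) := by
    have he : pd1 f = fun q => fderiv ℝ f q ((1:ℝ),(0:ℝ)) := funext fun q => pd1_eq f hd q
    rw [he, pd2_eq _ (hdapp _) p, hfd]
    rfl
  rw [h1, h2, hsymm]

end helpers

lemma pd1_fst {f : ℝ × ℝ → ℝ × ℝ} (hf : Differentiable ℝ f) (p : ℝ × ℝ) :
    pd1 (fun q => (f q).1) p = (pd1 f p).1 := by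
  have h := (ContinuousLinearMap.fst ℝ ℝ ℝ).hasFDerivAt.comp_hasDerivAt p.1
    (hasDerivAt_pd1 f hf p)
  exact h.deriv

lemma pd1_snd {f : ℝ × ℝ → ℝ × ℝ} (hf : Differentiable ℝ f) (p : ℝ × ℝ) :
    pd1 (fun q => (f q).2) p = (pd1 f p).2 := by
  have h := (ContinuousLinearMap.snd ℝ ℝ ℝ).hasFDerivAt.comp_hasDerivAt p.1
    (hasDerivAt_pd1 f hf p)
  exact h.deriv

lemma pd2_fst {f : ℝ × ℝ → ℝ × ℝ} (hf : Differentiable ℝ f) (p : ℝ × ℝ) :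
    pd2 (fun q => (f q).1) p = (pd2 f p).1 := by
  have h := (ContinuousLinearMap.fst ℝ ℝ ℝ).hasFDerivAt.comp_hasDerivAt p.2
    (hasDerivAt_pd2 f hf p)
  exact h.deriv

lemma pd2_snd {f : ℝ × ℝ → ℝ × ℝ} (hf : Differentiable ℝ f) (p : ℝ × ℝ) :
    pd2 (fun q => (f q).2) p = (pd2 f p).2 := by
  have h := (ContinuousLinearMap.snd ℝ ℝ ℝ).hasFDerivAt.comp_hasDerivAt p.2
    (hasDerivAt_pd2 f hf p)
  exact h.deriv

lemma pd1_mul {u v : ℝ × ℝ → ℝ} (hu : Differentiable ℝ u) (hv : Differentiable ℝ v)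
    (p : ℝ × ℝ) : pd1 (fun q => u q * v q) p = pd1 u p * v p + u p * pd1 v p := by
  have h := (hasDerivAt_pd1 u hu p).mul (hasDerivAt_pd1 v hv p)
  exact h.deriv

lemma pd2_mul {u v : ℝ × ℝ → ℝ} (hu : Differentiable ℝ u) (hv : Differentiable ℝ v)
    (p : ℝ × ℝ) : pd2 (fun q => u q * v q) p = pd2 u p * v p + u p * pd2 v p := by
  have h := (hasDerivAt_pd2 u hu p).mul (hasDerivAt_pd2 v hv p)
  exact h.deriv

lemma pd2_sub {u v : ℝ × ℝ → ℝ} (hu : Differentiable ℝ u) (hv : Differentiable ℝ v)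
    (p : ℝ × ℝ) : pd2 (fun q => u q - v q) p = pd2 u p - pd2 v p := by
  have h := (hasDerivAt_pd2 u hu p).sub (hasDerivAt_pd2 v hv p)
  exact h.deriv


lemma lipschitz_integral_deriv {K : ℝ≥0} {g : ℝ → ℝ} (hg : LipschitzWith K g) :
    ∫ x in (0:ℝ)..1, deriv g x = g 1 - g 0 := by
  set h : ℕ → ℝ := fun n => ((n : ℝ) + 1)⁻¹ with hh
  have hpos : ∀ n, 0 < h n := fun n => by positivity
  have hh0 : Tendsto h atTop (𝓝 0) := by
    simpa [hh, one_div] using tendsto_one_div_add_atTop_nhds_zero_nat (𝕜 := ℝ)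
  have slope_tendsto : ∀ (f : ℝ → ℝ) (c f' : ℝ), HasDerivAt f f' c →
      Tendsto (fun n => (f (c + h n) - f c) / h n) atTop (𝓝 f') := by
    intro f c f' hf
    have h1 : Tendsto (fun n => c + h n) atTop (𝓝[≠] c) := by
      apply tendsto_nhdsWithin_of_tendsto_nhds_of_eventually_within
      · simpa using tendsto_const_nhds.add hh0
      · exact Eventually.of_forall fun n => by
          simp only [mem_compl_singleton_iff]
          nlinarith [hpos n]
    have h2 := (hasDerivAt_iff_tendsto_slope.mp hf).comp h1
    refine h2.congr fun n => ?_
    show slope f c (c + h n) = _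
    rw [slope_def_field, show c + h n - c = h n by ring]
  have hgi : ∀ a b : ℝ, IntervalIntegrable g volume a b :=
    fun a b => hg.continuous.intervalIntegrable a b
  set F : ℕ → ℝ → ℝ := fun n x => (g (x + h n) - g x) / h n with hF
  have hFcont : ∀ n, Continuous (F n) :=
    fun n => ((hg.continuous.comp (continuous_add_right (h n))).sub hg.continuous).div_const _
  have hdct : Tendsto (fun n => ∫ x in (0:ℝ)..1, F n x) atTop
      (𝓝 (∫ x in (0:ℝ)..1, deriv g x)) := by
    apply intervalIntegral.tendsto_integral_filter_of_dominated_convergence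
      (bound := fun _ => (K : ℝ))
    · exact Eventually.of_forall fun n => (hFcont n).aestronglyMeasurable
    · refine Eventually.of_forall fun n => Eventually.of_forall fun x _ => ?_
      have hd := hg.dist_le_mul (x + h n) x
      rw [Real.dist_eq, Real.dist_eq, show x + h n - x = h n by ring,
        abs_of_pos (hpos n)] at hd
      rw [Real.norm_eq_abs, abs_div, abs_of_pos (hpos n), div_le_iff₀ (hpos n)]
      exact hd
    · exact intervalIntegrable_const
    · filter_upwards [hg.ae_differentiableAt_real] with x hx _
      exact slope_tendsto g x (deriv g x) hx.hasDerivAt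
  have hval : ∀ n, ∫ x in (0:ℝ)..1, F n x
      = (∫ x in (1:ℝ)..(1 + h n), g x) / h n - (∫ x in (0:ℝ)..(h n), g x) / h n := by
    intro n
    have hA : IntervalIntegrable (fun x => g (x + h n)) volume 0 1 :=
      (hg.continuous.comp (continuous_add_right (h n))).intervalIntegrable 0 1
    calc ∫ x in (0:ℝ)..1, F n x
        = ∫ x in (0:ℝ)..1, (g (x + h n) - g x) / h n := rfl
      _ = (∫ x in (0:ℝ)..1, (g (x + h n) - g x)) / h n := intervalIntegral.integral_div _ _
      _ = ((∫ x in (0:ℝ)..1, g (x + h n)) - ∫ x in (0:ℝ)..1, g x) / h n := by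
          rw [intervalIntegral.integral_sub hA (hgi _ _)]
      _ = ((∫ x in (0:ℝ)+ h n..1 + h n, g x) - ∫ x in (0:ℝ)..1, g x) / h n := by
          rw [intervalIntegral.integral_comp_add_right]
      _ = (∫ x in (1:ℝ)..(1 + h n), g x) / h n - (∫ x in (0:ℝ)..(h n), g x) / h n := by
          rw [← intervalIntegral.integral_add_adjacent_intervals (hgi (0 + h n) 1) (hgi 1 (1 + h n)),
            ← intervalIntegral.integral_add_adjacent_intervals (hgi 0 (h n)) (hgi (h n) 1),
            zero_add]
          ring
  have hend : ∀ c : ℝ, Tendsto (fun n => (∫ x in c..(c + h n), g x) / h n) atTop (𝓝 (g c)) := by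
    intro c
    have hG : HasDerivAt (fun u => ∫ x in c..u, g x) (g c) c :=
      intervalIntegral.integral_hasDerivAt_right (hgi c c)
        (hg.continuous.stronglyMeasurableAtFilter _ _) hg.continuous.continuousAt
    have := slope_tendsto (fun u => ∫ x in c..u, g x) c (g c) hG
    simpa [intervalIntegral.integral_same] using this
  have hlim2 : Tendsto (fun n => ∫ x in (0:ℝ)..1, F n x) atTop (𝓝 (g 1 - g 0)) := by
    have h2 := (hend 1).sub (hend 0)
    simp only [zero_add] at h2
    exact h2.congr fun n => (hval n).symm
  exact tendsto_nhds_unique hdct hlim2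


lemma smooth_lipschitzOnWith {Y : Type*} [NormedAddCommGroup Y] [NormedSpace ℝ Y]
    (f : ℝ → Y) (hf : ContDiff ℝ (⊤ : ℕ∞) f) (a b : ℝ) :
    ∃ K : ℝ≥0, LipschitzOnWith K f (Icc a b) := by
  have hc : ContinuousOn (deriv f) (Icc a b) :=
    (hf.continuous_deriv (by simp)).continuousOn
  obtain ⟨C, hC⟩ := isCompact_Icc.exists_bound_of_continuousOn hc
  refine ⟨C.toNNReal, ?_⟩
  apply (convex_Icc a b).lipschitzOnWith_of_nnnorm_deriv_le
    (fun x _ => (hf.differentiable (by simp)).differentiableAt)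
  intro x hx
  rw [← NNReal.coe_le_coe, coe_nnnorm, Real.coe_toNNReal']
  exact le_trans (hC x hx) (le_max_left _ _)

lemma sder_lipschitzOnWith (V : ℝ → ℝ × ℝ) (w : ℝ → ℝ) (hV : ContDiff ℝ (⊤ : ℕ∞) V)
    (hw : ContDiff ℝ (⊤ : ℕ∞) w) (hV0 : ∀ r, V r ≠ 0) :
    ∃ K : ℝ≥0, LipschitzOnWith K (fun r => ‖V r‖⁻¹ * w r) (Icc (-1:ℝ) 2) := by
  obtain ⟨KV, hKV⟩ := smooth_lipschitzOnWith V hV (-1) 2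
  obtain ⟨Kw, hKw⟩ := smooth_lipschitzOnWith w hw (-1) 2
  obtain ⟨x₀, hx₀s, hx₀⟩ := isCompact_Icc.exists_isMinOn (⟨0, by norm_num⟩ : (Icc (-1:ℝ) 2).Nonempty)
    ((continuous_norm.comp hV.continuous).continuousOn)
  set m := ‖V x₀‖ with hmdef
  have hm : 0 < m := norm_pos_iff.mpr (hV0 x₀)
  obtain ⟨C, hC⟩ := isCompact_Icc.exists_bound_of_continuousOn
    (hw.continuous.continuousOn : ContinuousOn w (Icc (-1:ℝ) 2))
  have hC0 : 0 ≤ C := le_trans (norm_nonneg _) (hC 0 (by norm_num))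
  set k : ℝ := m⁻¹ * Kw + C * KV / (m * m) with hkdef
  refine ⟨k.toNNReal, LipschitzOnWith.of_dist_le_mul fun x hx y hy => ?_⟩
  set dxy := dist x y with hdxy
  have hd0 : 0 ≤ dxy := dist_nonneg
  have hNx : m ≤ ‖V x‖ := hx₀ hx
  have hNy : m ≤ ‖V y‖ := hx₀ hy
  have hNx0 : 0 < ‖V x‖ := lt_of_lt_of_le hm hNx
  have hNy0 : 0 < ‖V y‖ := lt_of_lt_of_le hm hNy
  have hw' : |w x - w y| ≤ Kw * dxy := by
    have := hKw.dist_le_mul x hx y hy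
    rwa [Real.dist_eq] at this
  have hV' : |‖V x‖ - ‖V y‖| ≤ KV * dxy := by
    refine le_trans (abs_norm_sub_norm_le _ _) ?_
    have := hKV.dist_le_mul x hx y hy
    rwa [dist_eq_norm] at this
  have hCy : |w y| ≤ C := by
    have := hC y hy; rwa [Real.norm_eq_abs] at this
  have hinv : |(‖V x‖)⁻¹ - (‖V y‖)⁻¹| ≤ KV * dxy / (m * m) := by
    have he : (‖V x‖)⁻¹ - (‖V y‖)⁻¹ = (‖V y‖ - ‖V x‖) / (‖V x‖ * ‖V y‖) := by
      field_simp
    rw [he, abs_div, abs_of_pos (mul_pos hNx0 hNy0)]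
    have h1 : |‖V y‖ - ‖V x‖| ≤ KV * dxy := by rwa [abs_sub_comm] at hV'
    have h2 : m * m ≤ ‖V x‖ * ‖V y‖ :=
      mul_le_mul hNx hNy (le_of_lt hm) (norm_nonneg _)
    exact div_le_div₀ (by positivity) h1 (mul_pos hm hm) h2
  have hinvx : (‖V x‖)⁻¹ ≤ m⁻¹ := by
    apply inv_anti₀ hm hNx
  calc dist (‖V x‖⁻¹ * w x) (‖V y‖⁻¹ * w y)
      = |(‖V x‖)⁻¹ * (w x - w y) + w y * ((‖V x‖)⁻¹ - (‖V y‖)⁻¹)| := by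
        rw [Real.dist_eq]; congr 1; ring
    _ ≤ |(‖V x‖)⁻¹ * (w x - w y)| + |w y * ((‖V x‖)⁻¹ - (‖V y‖)⁻¹)| := abs_add_le _ _
    _ = (‖V x‖)⁻¹ * |w x - w y| + |w y| * |(‖V x‖)⁻¹ - (‖V y‖)⁻¹| := by
        rw [abs_mul, abs_mul, abs_of_pos (inv_pos.mpr hNx0)]
    _ ≤ m⁻¹ * (Kw * dxy) + C * (KV * dxy / (m * m)) := by
        refine add_le_add (mul_le_mul hinvx hw' (abs_nonneg _) (by positivity))
          (mul_le_mul hCy hinv (abs_nonneg _) hC0)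
    _ = k * dxy := by rw [hkdef]; ring
    _ ≤ (k.toNNReal : ℝ) * dxy := mul_le_mul_of_nonneg_right (Real.le_coe_toNNReal k) hd0

lemma sder_ftc (V : ℝ → ℝ × ℝ) (w : ℝ → ℝ) (hV : ContDiff ℝ (⊤ : ℕ∞) V)
    (hw : ContDiff ℝ (⊤ : ℕ∞) w) (hV0 : ∀ r, V r ≠ 0) :
    ∫ ρ in (0:ℝ)..1, deriv (fun r => ‖V r‖⁻¹ * w r) ρ
      = ‖V 1‖⁻¹ * w 1 - ‖V 0‖⁻¹ * w 0 := by
  obtain ⟨K, hK⟩ := sder_lipschitzOnWith V w hV hw hV0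
  obtain ⟨g, hg, heq⟩ := hK.extend_real
  have hderiv : EqOn (deriv (fun r => ‖V r‖⁻¹ * w r)) (deriv g) (uIcc (0:ℝ) 1) := by
    intro ρ hρ
    rw [uIcc_of_le (by norm_num : (0:ℝ) ≤ 1)] at hρ
    have hmem : Ioo (-1:ℝ) 2 ∈ 𝓝 ρ := isOpen_Ioo.mem_nhds
      ⟨by linarith [hρ.1], by linarith [hρ.2]⟩
    apply Filter.EventuallyEq.deriv_eq
    filter_upwards [hmem] with r hr
    exact heq (Ioo_subset_Icc_self hr)
  rw [intervalIntegral.integral_congr hderiv, lipschitz_integral_deriv hg,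
    ← heq (show (1:ℝ) ∈ Icc (-1:ℝ) 2 by norm_num),
    ← heq (show (0:ℝ) ∈ Icc (-1:ℝ) 2 by norm_num)]

section curve

variable {X : ℝ × ℝ → ℝ × ℝ} {μ : ℝ × ℝ → ℝ}

/-- The cross-product form of the flux derivative. -/
lemma flux_deriv_eq (hreg : ∀ p : ℝ × ℝ, pd1 X p ≠ 0)
    (hmotion : ∀ p : ℝ × ℝ, dot (pd2 X p) (nv X p) = sder X (sder X μ) p) (p : ℝ × ℝ) :
    pd1 (sder X μ) p = (pd2 X p).1 * (pd1 X p).2 - (pd2 X p).2 * (pd1 X p).1 := by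
  have hmo := hmotion p
  have hn : ‖pd1 X p‖ ≠ 0 := norm_ne_zero_iff.mpr (hreg p)
  simp only [dot, nv, perp, sder, Prod.fst_neg, Prod.snd_neg, Prod.smul_fst, Prod.smul_snd,
    smul_eq_mul, neg_neg] at hmo
  field_simp at hmo
  linarith [hmo]

end curve

section curve2

variable {X : ℝ × ℝ → ℝ × ℝ} {μ : ℝ × ℝ → ℝ}

lemma curve_decomp (hX : ContDiff ℝ (⊤ : ℕ∞) X) (hμ : ContDiff ℝ (⊤ : ℕ∞) μ)
    (hreg : ∀ p : ℝ × ℝ, pd1 X p ≠ 0)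
    (hmotion : ∀ p : ℝ × ℝ, dot (pd2 X p) (nv X p) = sder X (sder X μ) p) (p : ℝ × ℝ) :
    pd2 (fun q => (X q).2 * (pd1 X q).1) p
      = pd1 (fun q => (X q).2 * (pd2 X q).1) p - pd1 (sder X μ) p := by
  have hXd : Differentiable ℝ X := hX.differentiable (by simp)
  have hA : ContDiff ℝ (⊤ : ℕ∞) (fun q => (X q).1) := contDiff_fst.comp hX
  have hB : ContDiff ℝ (⊤ : ℕ∞) (fun q => (X q).2) := contDiff_snd.comp hX
  have hpA : ContDiff ℝ (⊤ : ℕ∞) (pd1 fun q => (X q).1) := contDiff_pd1 hA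
  have hqA : ContDiff ℝ (⊤ : ℕ∞) (pd2 fun q => (X q).1) := contDiff_pd2 hA
  have e1 : (fun q => (X q).2 * (pd1 X q).1)
      = fun q => (X q).2 * pd1 (fun q' => (X q').1) q :=
    funext fun q => by rw [pd1_fst hXd q]
  have e2 : (fun q => (X q).2 * (pd2 X q).1)
      = fun q => (X q).2 * pd2 (fun q' => (X q').1) q :=
    funext fun q => by rw [pd2_fst hXd q]
  rw [e1, e2, pd2_mul (hB.differentiable (by simp)) (hpA.differentiable (by simp)) p,
    pd1_mul (hB.differentiable (by simp)) (hqA.differentiable (by simp)) p,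
    flux_deriv_eq hreg hmotion p, ← pd_comm hA p,
    pd1_fst hXd p, pd1_snd hXd p, pd2_fst hXd p, pd2_snd hXd p]
  ring

lemma curve_integral (hX : ContDiff ℝ (⊤ : ℕ∞) X) (hμ : ContDiff ℝ (⊤ : ℕ∞) μ)
    (hreg : ∀ p : ℝ × ℝ, pd1 X p ≠ 0)
    (hmotion : ∀ p : ℝ × ℝ, dot (pd2 X p) (nv X p) = sder X (sder X μ) p) (t : ℝ) :
    ∫ ρ in (0:ℝ)..1, pd2 (fun q => (X q).2 * (pd1 X q).1) (ρ, t)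
      = ((X (1, t)).2 * (pd2 X (1, t)).1 - (X (0, t)).2 * (pd2 X (0, t)).1)
        - (sder X μ (1, t) - sder X μ (0, t)) := by
  have hXd : Differentiable ℝ X := hX.differentiable (by simp)
  have hA : ContDiff ℝ (⊤ : ℕ∞) (fun q => (X q).1) := contDiff_fst.comp hX
  have hB : ContDiff ℝ (⊤ : ℕ∞) (fun q => (X q).2) := contDiff_snd.comp hX
  have hN : ContDiff ℝ (⊤ : ℕ∞) (fun q => (X q).2 * (pd2 X q).1) := by
    have e2 : (fun q => (X q).2 * (pd2 X q).1)
        = fun q => (X q).2 * pd2 (fun q' => (X q').1) q :=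
      funext fun q => by rw [pd2_fst hXd q]
    rw [e2]
    exact hB.mul (contDiff_pd2 hA)
  -- continuity of the flux derivative term
  have hfluxcont : Continuous (fun p => pd1 (sder X μ) p) := by
    have : (fun p => pd1 (sder X μ) p)
        = fun p => (pd2 X p).1 * (pd1 X p).2 - (pd2 X p).2 * (pd1 X p).1 :=
      funext fun p => flux_deriv_eq hreg hmotion p
    rw [this]
    have h1 : Continuous (pd1 X) := (contDiff_pd1 hX).continuous
    have h2 : Continuous (pd2 X) := (contDiff_pd2 hX).continuous
    exact ((h2.fst.mul h1.snd).sub (h2.snd.mul h1.fst))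
  -- rewrite the integrand via curve_decomp
  have e0 : (fun ρ => pd2 (fun q => (X q).2 * (pd1 X q).1) (ρ, t))
      = fun ρ => pd1 (fun q => (X q).2 * (pd2 X q).1) (ρ, t) - pd1 (sder X μ) (ρ, t) :=
    funext fun ρ => curve_decomp hX hμ hreg hmotion (ρ, t)
  have hi1 : IntervalIntegrable (fun ρ => pd1 (fun q => (X q).2 * (pd2 X q).1) (ρ, t))
      volume 0 1 :=
    (((contDiff_pd1 hN).continuous).comp (continuous_id.prodMk continuous_const)).intervalIntegrable 0 1
  have hi2 : IntervalIntegrable (fun ρ => pd1 (sder X μ) (ρ, t)) volume 0 1 :=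
    (hfluxcont.comp (continuous_id.prodMk continuous_const)).intervalIntegrable 0 1
  have hpart1 : (∫ ρ in (0:ℝ)..1, pd1 (fun q => (X q).2 * (pd2 X q).1) (ρ, t))
      = (X (1, t)).2 * (pd2 X (1, t)).1 - (X (0, t)).2 * (pd2 X (0, t)).1 := by
    have hNslice : Differentiable ℝ (fun ρ : ℝ => (X (ρ, t)).2 * (pd2 X (ρ, t)).1) :=
      (hN.differentiable (by simp)).comp (differentiable_id.prodMk (differentiable_const t))
    have h := intervalIntegral.integral_deriv_eq_sub (a := (0:ℝ)) (b := 1)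
      (f := fun ρ : ℝ => (X (ρ, t)).2 * (pd2 X (ρ, t)).1)
      (fun x _ => hNslice.differentiableAt) (by exact hi1)
    exact h
  have hpart2 : (∫ ρ in (0:ℝ)..1, pd1 (sder X μ) (ρ, t))
      = sder X μ (1, t) - sder X μ (0, t) := by
    have hV : ContDiff ℝ (⊤ : ℕ∞) (fun r : ℝ => pd1 X (r, t)) :=
      (contDiff_pd1 hX).comp (contDiff_id.prodMk contDiff_const)
    have hw : ContDiff ℝ (⊤ : ℕ∞) (fun r : ℝ => pd1 μ (r, t)) :=
      (contDiff_pd1 hμ).comp (contDiff_id.prodMk contDiff_const)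
    have h := sder_ftc (fun r => pd1 X (r, t)) (fun r => pd1 μ (r, t)) hV hw
      (fun r => hreg (r, t))
    exact h
  calc ∫ ρ in (0:ℝ)..1, pd2 (fun q => (X q).2 * (pd1 X q).1) (ρ, t)
      = ∫ ρ in (0:ℝ)..1, (pd1 (fun q => (X q).2 * (pd2 X q).1) (ρ, t)
          - pd1 (sder X μ) (ρ, t)) :=
        intervalIntegral.integral_congr fun ρ _ => curve_decomp hX hμ hreg hmotion (ρ, t)
    _ = (∫ ρ in (0:ℝ)..1, pd1 (fun q => (X q).2 * (pd2 X q).1) (ρ, t))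
          - ∫ ρ in (0:ℝ)..1, pd1 (sder X μ) (ρ, t) := intervalIntegral.integral_sub hi1 hi2
    _ = _ := by rw [hpart1, hpart2]

end curve2

/-- Continuous area conservation: for three evolving curves (parameterized over
ρ ∈ [0,1]) obeying surface diffusion ∂_t X_j · n_j = ∂_{s_j s_j} μ_j, with contact
points on the substrate y = 0, a common junction at ρ = 1, zero mass flux at the
contact points and equal fluxes at the junction, the enclosed area
A(t) = ∫_{Γ₂} y₂ ∂_{s₂}x₂ ds₂ - ∫_{Γ₁} y₁ ∂_{s₁}x₁ ds₁ satisfies dA/dt = 0. -/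
theorem continuous_area_conservation
    (X : Fin 3 → ℝ × ℝ → ℝ × ℝ) (μ : Fin 3 → ℝ × ℝ → ℝ)
    (hX : ∀ j, ContDiff ℝ (⊤ : ℕ∞) (X j)) (hμ : ∀ j, ContDiff ℝ (⊤ : ℕ∞) (μ j))
    (hreg : ∀ j (p : ℝ × ℝ), pd1 (X j) p ≠ 0)
    (hmotion : ∀ j (p : ℝ × ℝ),
      dot (pd2 (X j) p) (nv (X j) p) = sder (X j) (sder (X j) (μ j)) p)
    (hy0 : ∀ j (t : ℝ), (X j (0, t)).2 = 0)
    (hjunc : ∀ t : ℝ, X 0 (1, t) = X 1 (1, t) ∧ X 1 (1, t) = X 2 (1, t))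
    (hflux0 : ∀ j (t : ℝ), sder (X j) (μ j) (0, t) = 0)
    (hfluxL : ∀ t : ℝ, sder (X 0) (μ 0) (1, t) = sder (X 1) (μ 1) (1, t)
      ∧ sder (X 1) (μ 1) (1, t) = sder (X 2) (μ 2) (1, t)) :
    ∀ t : ℝ,
      deriv (fun s => ∫ ρ in (0:ℝ)..1,
          ((X 1 (ρ, s)).2 * (pd1 (X 1) (ρ, s)).1
            - (X 0 (ρ, s)).2 * (pd1 (X 0) (ρ, s)).1)) t = 0 := by
  intro t₀
  -- the smooth integrand
  set G : ℝ × ℝ → ℝ := fun q => (X 1 q).2 * (pd1 (X 1) q).1 - (X 0 q).2 * (pd1 (X 0) q).1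
    with hGdef
  have hg : ∀ j, ContDiff ℝ (⊤ : ℕ∞) (fun q => (X j q).2 * (pd1 (X j) q).1) := fun j =>
    (contDiff_snd.comp (hX j)).mul (contDiff_fst.comp (contDiff_pd1 (hX j)))
  have hG : ContDiff ℝ (⊤ : ℕ∞) G := (hg 1).sub (hg 0)
  have hGd : Differentiable ℝ G := hG.differentiable (by simp)
  have hG2cont : Continuous (pd2 G) := (contDiff_pd2 hG).continuous
  -- bound for the dominated-convergence theorem
  obtain ⟨C, hC⟩ := (isCompact_Icc.prod isCompact_Icc).exists_bound_of_continuousOn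
    (hG2cont.continuousOn :
      ContinuousOn (pd2 G) (Icc (0:ℝ) 1 ×ˢ Icc (t₀ - 1) (t₀ + 1)))
  -- differentiation under the integral sign
  have hder := intervalIntegral.hasDerivAt_integral_of_dominated_loc_of_deriv_le
    (F := fun s ρ => G (ρ, s)) (F' := fun s ρ => pd2 G (ρ, s)) (x₀ := t₀)
    (a := 0) (b := 1) (μ := volume) (bound := fun _ => C) (ball_mem_nhds t₀ one_pos)
    (Eventually.of_forall fun s =>
      (hG.continuous.comp (continuous_id.prodMk continuous_const)).aestronglyMeasurable)
    ((hG.continuous.comp (continuous_id.prodMk continuous_const)).intervalIntegrable 0 1)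
    ((hG2cont.comp (continuous_id.prodMk continuous_const)).aestronglyMeasurable)
    (Eventually.of_forall fun ρ hρ s hs => by
      have hρ' : ρ ∈ Icc (0:ℝ) 1 := by
        rw [uIoc_of_le (by norm_num : (0:ℝ) ≤ 1)] at hρ
        exact ⟨le_of_lt hρ.1, hρ.2⟩
      have hs' : s ∈ Icc (t₀ - 1) (t₀ + 1) := by
        rw [mem_ball, Real.dist_eq, abs_sub_lt_iff] at hs
        constructor <;> linarith [hs.1, hs.2]
      exact hC (ρ, s) ⟨hρ', hs'⟩)
    intervalIntegrable_const
    (Eventually.of_forall fun ρ _ s _ => hasDerivAt_pd2 G hGd (ρ, s))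
  have hderiv : deriv (fun s => ∫ ρ in (0:ℝ)..1, G (ρ, s)) t₀
      = ∫ ρ in (0:ℝ)..1, pd2 G (ρ, t₀) := hder.2.deriv
  have hres : deriv (fun s => ∫ ρ in (0:ℝ)..1,
      ((X 1 (ρ, s)).2 * (pd1 (X 1) (ρ, s)).1
        - (X 0 (ρ, s)).2 * (pd1 (X 0) (ρ, s)).1)) t₀
      = ∫ ρ in (0:ℝ)..1, pd2 G (ρ, t₀) := hderiv
  rw [hres]
  -- split the integral
  have hsplit : (fun ρ : ℝ => pd2 G (ρ, t₀))
      = fun ρ : ℝ => pd2 (fun q => (X 1 q).2 * (pd1 (X 1) q).1) (ρ, t₀)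
        - pd2 (fun q => (X 0 q).2 * (pd1 (X 0) q).1) (ρ, t₀) :=
    funext fun ρ => pd2_sub ((hg 1).differentiable (by simp)) ((hg 0).differentiable (by simp)) (ρ, t₀)
  have hint : ∀ j, IntervalIntegrable
      (fun ρ : ℝ => pd2 (fun q => (X j q).2 * (pd1 (X j) q).1) (ρ, t₀)) volume 0 1 := fun j =>
    (((contDiff_pd2 (hg j)).continuous).comp (continuous_id.prodMk continuous_const)).intervalIntegrable 0 1
  rw [hsplit, intervalIntegral.integral_sub (hint 1) (hint 0),
    curve_integral (hX 1) (hμ 1) (hreg 1) (hmotion 1) t₀,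
    curve_integral (hX 0) (hμ 0) (hreg 0) (hmotion 0) t₀]
  -- boundary conditions
  have hy1 : (X 1 (0, t₀)).2 = 0 := hy0 1 t₀
  have hy0' : (X 0 (0, t₀)).2 = 0 := hy0 0 t₀
  have hf1 : sder (X 1) (μ 1) (0, t₀) = 0 := hflux0 1 t₀
  have hf0 : sder (X 0) (μ 0) (0, t₀) = 0 := hflux0 0 t₀
  have hfL : sder (X 0) (μ 0) (1, t₀) = sder (X 1) (μ 1) (1, t₀) := (hfluxL t₀).1
  have hjy : (X 1 (1, t₀)).2 = (X 0 (1, t₀)).2 := by rw [(hjunc t₀).1]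
  have hjt : pd2 (X 1) (1, t₀) = pd2 (X 0) (1, t₀) := by
    show deriv (fun s => X 1 ((1:ℝ), s)) t₀ = deriv (fun s => X 0 ((1:ℝ), s)) t₀
    congr 1
    exact funext fun s => ((hjunc s).1).symm
  rw [hy1, hy0', hf1, hf0, hfL, hjy, hjt]
  ring
end

section
/- Discrete area conservation of the SP-PFEM: if (X^{m+1}, μ^{m+1}) solves the fully discrete scheme with time-weighted normal n_j^{m+1/2} = -[∂_ρ X_j^m + ∂_ρ X_j^{m+1}]^⊥/(2|∂_ρ X_j^m|), then the discrete enclosed area A^m = (1/2)Σ_k (x_{2,k}^m - x_{2,k-1}^m)(y_{2,k}^m + y_{2,k-1}^m) - (1/2)Σ_k (x_{1,k}^m - x_{1,k-1}^m)(y_{1,k}^m + y_{1,k-1}^m) satisfies A^{m+1} = A^m. -/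
/-- Time-weighted discrete normal n_{j,k}^{m+1/2} on the k-th segment of the j-th
curve: n^{m+1/2} = -[∂_ρ X^m + ∂_ρ X^{m+1}]^⊥ / (2|∂_ρ X^m|). -/
noncomputable def nhalf (Xm Xp : Fin 3 → ℕ → ℝ × ℝ) (j : Fin 3) (k : ℕ) : ℝ × ℝ :=
  (-(2 * ‖Xm j k - Xm j (k - 1)‖)⁻¹) •
    perp ((Xm j k - Xm j (k - 1)) + (Xp j k - Xp j (k - 1)))

/-- Discrete enclosed area A^m between the two outer piecewise-linear curves
(index 1 is Γ₂, index 0 is Γ₁) and the substrate. -/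
noncomputable def Adisc (N : Fin 3 → ℕ) (X : Fin 3 → ℕ → ℝ × ℝ) : ℝ :=
  (1 / 2) * (∑ k ∈ Finset.Icc 1 (N 1),
      ((X 1 k).1 - (X 1 (k - 1)).1) * ((X 1 k).2 + (X 1 (k - 1)).2))
  - (1 / 2) * (∑ k ∈ Finset.Icc 1 (N 0),
      ((X 0 k).1 - (X 0 (k - 1)).1) * ((X 0 k).2 + (X 0 (k - 1)).2))

noncomputable def betaF (P Q : ℝ × ℝ) : ℝ :=
  Q.1 * Q.2 / 2 - P.1 * P.2 / 2 + Q.1 * P.2 / 2 - Q.2 * P.1 / 2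

lemma seg_id (Δt c : ℝ) (hΔt : Δt ≠ 0) (a b a' b' : ℝ × ℝ) (h : b ≠ a) :
    ‖b - a‖ * (1 / 2) *
      (dot (Δt⁻¹ • (b' - b)) ((-(2 * ‖b - a‖)⁻¹) • perp ((b - a) + (b' - a'))) * c
       + dot (Δt⁻¹ • (a' - a)) ((-(2 * ‖b - a‖)⁻¹) • perp ((b - a) + (b' - a'))) * c)
    = (c / Δt) * ((1 / 2) * ((b.1 - a.1) * (b.2 + a.2))
        - (1 / 2) * ((b'.1 - a'.1) * (b'.2 + a'.2))
        + betaF b b' - betaF a a') := by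
  have hr : ‖b - a‖ ≠ 0 := norm_ne_zero_iff.mpr (sub_ne_zero.mpr h)
  simp only [dot, perp, betaF, Prod.smul_fst, Prod.smul_snd, Prod.fst_sub, Prod.snd_sub,
    Prod.fst_add, Prod.snd_add, smul_eq_mul]
  field_simp
  ring

lemma curve_id (Δt c : ℝ) (hΔt : Δt ≠ 0) (X X' : ℕ → ℝ × ℝ) (n : ℕ)
    (hseg : ∀ k, 1 ≤ k → k ≤ n → X k ≠ X (k - 1)) :
    ∑ k ∈ Finset.Icc 1 n, ‖X k - X (k - 1)‖ * (1 / 2) *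
        (dot (Δt⁻¹ • (X' k - X k))
            ((-(2 * ‖X k - X (k - 1)‖)⁻¹) • perp ((X k - X (k - 1)) + (X' k - X' (k - 1)))) * c
         + dot (Δt⁻¹ • (X' (k - 1) - X (k - 1)))
            ((-(2 * ‖X k - X (k - 1)‖)⁻¹) • perp ((X k - X (k - 1)) + (X' k - X' (k - 1)))) * c)
    = (c / Δt) * ((1 / 2) * (∑ k ∈ Finset.Icc 1 n,
          ((X k).1 - (X (k - 1)).1) * ((X k).2 + (X (k - 1)).2))
        - (1 / 2) * (∑ k ∈ Finset.Icc 1 n,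
          ((X' k).1 - (X' (k - 1)).1) * ((X' k).2 + (X' (k - 1)).2))
        + betaF (X n) (X' n) - betaF (X 0) (X' 0)) := by
  induction n with
  | zero => simp
  | succ n ih =>
    have h1 : (1 : ℕ) ≤ n + 1 := Nat.succ_le_succ (Nat.zero_le n)
    rw [Finset.sum_Icc_succ_top h1, Finset.sum_Icc_succ_top h1, Finset.sum_Icc_succ_top h1,
      ih (fun k hk1 hk2 => hseg k hk1 (hk2.trans (Nat.le_succ n)))]
    have hs := seg_id Δt c hΔt (X n) (X (n + 1)) (X' n) (X' (n + 1))
      (by simpa using hseg (n + 1) h1 le_rfl)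
    simp only [Nat.add_sub_cancel]
    linear_combination hs


/-- Discrete area conservation of the structure-preserving PFEM: if
(X^{m+1}, μ^{m+1}) solves the fully discrete scheme with the time-weighted
normal n^{m+1/2}, then the discrete enclosed area is conserved: A^{m+1} = A^m. -/
theorem discrete_area_conservation
    (N : Fin 3 → ℕ) (hN : ∀ j, 0 < N j)
    (Δt : ℝ) (hΔt : 0 < Δt)
    (Xm Xp : Fin 3 → ℕ → ℝ × ℝ) (μp : Fin 3 → ℕ → ℝ)
    (hseg : ∀ (j : Fin 3) (k : ℕ), 1 ≤ k → k ≤ N j → Xm j k ≠ Xm j (k - 1))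
    (hy0m : ∀ j, (Xm j 0).2 = 0) (hy0p : ∀ j, (Xp j 0).2 = 0)
    (hjm : Xm 0 (N 0) = Xm 1 (N 1) ∧ Xm 1 (N 1) = Xm 2 (N 2))
    (hjp : Xp 0 (N 0) = Xp 1 (N 1) ∧ Xp 1 (N 1) = Xp 2 (N 2))
    -- the first equation of the SP-PFEM scheme, for all discrete test functions
    -- φ = (φ₁, φ₂, φ₃) with φ₁(1) + φ₂(1) + φ₃(1) = 0 at the junction
    (hscheme : ∀ φ : Fin 3 → ℕ → ℝ, φ 0 (N 0) + φ 1 (N 1) + φ 2 (N 2) = 0 →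
      (∑ j : Fin 3,
        ((∑ k ∈ Finset.Icc 1 (N j),
            ‖Xm j k - Xm j (k - 1)‖ * (1 / 2) *
              (dot (Δt⁻¹ • (Xp j k - Xm j k)) (nhalf Xm Xp j k) * φ j k
               + dot (Δt⁻¹ • (Xp j (k - 1) - Xm j (k - 1))) (nhalf Xm Xp j k)
                   * φ j (k - 1)))
         + ∑ k ∈ Finset.Icc 1 (N j),
            (μp j k - μp j (k - 1)) * (φ j k - φ j (k - 1))
              / ‖Xm j k - Xm j (k - 1)‖)) = 0) :
    Adisc N Xp = Adisc N Xm := by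
  have hΔ : Δt ≠ 0 := ne_of_gt hΔt
  have E := hscheme (fun j _ => ![Δt, -Δt, 0] j) (by simp)
  simp only [Fin.sum_univ_three, Matrix.cons_val_zero, Matrix.cons_val_one, Matrix.head_cons,
    Matrix.cons_val_two, Matrix.tail_cons, sub_self, mul_zero, zero_div,
    Finset.sum_const_zero, add_zero, nhalf] at E
  have h0 := curve_id Δt Δt hΔ (Xm 0) (Xp 0) (N 0) (hseg 0)
  have h1 := curve_id Δt (-Δt) hΔ (Xm 1) (Xp 1) (N 1) (hseg 1)
  rw [div_self hΔ, one_mul] at h0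
  rw [neg_div, div_self hΔ] at h1
  have hb0 : betaF (Xm 0 0) (Xp 0 0) = 0 := by
    unfold betaF; rw [hy0m 0, hy0p 0]; ring
  have hb1 : betaF (Xm 1 0) (Xp 1 0) = 0 := by
    unfold betaF; rw [hy0m 1, hy0p 1]; ring
  have hbj : betaF (Xm 0 (N 0)) (Xp 0 (N 0)) = betaF (Xm 1 (N 1)) (Xp 1 (N 1)) := by
    rw [hjm.1, hjp.1]
  unfold Adisc
  rw [h0, h1, hb0, hb1, hbj] at E
  linarith [E]
end
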